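/- arXiv:0912.0988 — 3 statements merged into one kernel-verified Lean document; each statement's English description precedes it below -/
import Mathlib

section
/- Let p be an odd prime and n ≥ 0 an integer. If y, z ∈ ℂ_p satisfy z^{p^n} = y and |y - 1| ≤ p^{-1 - 1/(p-1)}, then |z - 1| ≤ p^{-1/(p^{n-1}(p-1))}. -/
/-!
Write `u = z - 1`. For a prime `p`, `(1 + u)^p - 1 = u^p + ∑_{0<k<p} C(p,k) u^k` with
`p ∣ C(p,k)`, so in an ultrametric field the term `u^p` dominates as soon as
`‖u‖^(p-1) > ‖p‖`, and then `‖z^p - 1‖ = ‖u‖^p`. Hence `‖z^p - 1‖ ≤ r^p` forces `‖z - 1‖ ≤ r`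
whenever `r^(p-1) ≥ ‖p‖`. Applying this along `z^(p^n), z^(p^(n-1)), …, z` with radii
`r^(p^n), …, r`, where `r^(p^n) = p^(-p/(p-1))`, the threshold condition holds at every step
because `‖p‖^p = (r^(p^n))^(p-1)`.
-/

open Finset

theorem add_one_pow_sub_pow_sub_one {R : Type*} [CommRing R] (u : R) {p : ℕ} (hp : 0 < p) :
    (u + 1) ^ p - u ^ p - 1 = ∑ k ∈ Ioo 0 p, u ^ k * (p.choose k : R) := by
  rw [add_pow, sum_range_succ, range_eq_Ico, sum_eq_sum_Ico_succ_bot hp,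
    Ico_add_one_left_eq_Ioo]
  simp

namespace IsUltrametricDist

variable {K : Type*} [NormedField K] [IsUltrametricDist K] {p : ℕ}

theorem norm_choose_le_norm_natCast (hp : p.Prime) {k : ℕ} (hk0 : 0 < k) (hkp : k < p) :
    ‖(p.choose k : K)‖ ≤ ‖(p : K)‖ := by
  obtain ⟨m, hm⟩ := hp.dvd_choose_self hk0.ne' hkp
  rw [hm, Nat.cast_mul, norm_mul]
  exact mul_le_of_le_one_right (norm_nonneg _) (norm_natCast_le_one K m)

theorem norm_pow_sub_one_eq_norm_sub_one_pow (hp : p.Prime) {z : K}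
    (h : ‖(p : K)‖ < ‖z - 1‖ ^ (p - 1)) : ‖z ^ p - 1‖ = ‖z - 1‖ ^ p := by
  set u := z - 1
  have hu : 0 < ‖u‖ := by
    refine (norm_nonneg u).lt_of_ne fun h0 => ?_
    rw [← h0, zero_pow (by have := hp.two_le; omega)] at h
    exact (norm_nonneg _).not_gt h
  have hterm : ∀ k ∈ Ioo 0 p, ‖u ^ k * (p.choose k : K)‖ < ‖u‖ ^ p := by
    intro k hk
    obtain ⟨hk0, hkp⟩ := mem_Ioo.1 hk
    rw [norm_mul, norm_pow]
    rcases le_or_gt ‖u‖ 1 with hu1 | hu1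
    · calc ‖u‖ ^ k * ‖(p.choose k : K)‖ < ‖u‖ ^ k * ‖u‖ ^ (p - k) := by
            gcongr
            calc ‖(p.choose k : K)‖ ≤ ‖(p : K)‖ := norm_choose_le_norm_natCast hp hk0 hkp
              _ < ‖u‖ ^ (p - 1) := h
              _ ≤ ‖u‖ ^ (p - k) := pow_le_pow_of_le_one hu.le hu1 (by omega)
        _ = ‖u‖ ^ p := by rw [← pow_add, Nat.add_sub_cancel' hkp.le]
    · calc ‖u‖ ^ k * ‖(p.choose k : K)‖ ≤ ‖u‖ ^ k :=
            mul_le_of_le_one_right (by positivity) (norm_natCast_le_one K _)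
        _ < ‖u‖ ^ p := pow_lt_pow_right₀ hu1 hkp
  have hsum : ‖∑ k ∈ Ioo 0 p, u ^ k * (p.choose k : K)‖ < ‖u‖ ^ p := by
    obtain ⟨k, hk, hle⟩ := exists_norm_finsetSum_le_of_nonempty
      ⟨1, mem_Ioo.2 ⟨one_pos, hp.one_lt⟩⟩ fun k => u ^ k * (p.choose k : K)
    exact hle.trans_lt (hterm k hk)
  have hexp : z ^ p - 1 = u ^ p + ∑ k ∈ Ioo 0 p, u ^ k * (p.choose k : K) := by
    rw [← add_one_pow_sub_pow_sub_one u hp.pos, sub_add_cancel]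
    ring
  have hne : ‖u ^ p‖ ≠ ‖∑ k ∈ Ioo 0 p, u ^ k * (p.choose k : K)‖ := by
    rw [norm_pow]
    exact hsum.ne'
  rw [hexp, norm_add_eq_max_of_norm_ne_norm hne, norm_pow, max_eq_left hsum.le]

theorem norm_sub_one_le_of_norm_pow_sub_one_le (hp : p.Prime) {r : ℝ} (hr : 0 ≤ r)
    (hpr : ‖(p : K)‖ ≤ r ^ (p - 1)) {z : K} (h : ‖z ^ p - 1‖ ≤ r ^ p) : ‖z - 1‖ ≤ r := by
  by_contra! hlt
  have hkey := norm_pow_sub_one_eq_norm_sub_one_pow hp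
    (hpr.trans_lt (pow_lt_pow_left₀ hlt hr (by have := hp.two_le; omega)))
  exact (pow_lt_pow_left₀ hlt hr hp.ne_zero).not_ge (hkey ▸ h)

theorem norm_sub_one_le_of_norm_pow_prime_pow_sub_one_le (hp : p.Prime) (n : ℕ) {r : ℝ}
    (hr0 : 0 ≤ r) (hr1 : r ≤ 1) (hpr : ‖(p : K)‖ ^ p ≤ (r ^ p ^ n) ^ (p - 1)) {z : K}
    (h : ‖z ^ p ^ n - 1‖ ≤ r ^ p ^ n) : ‖z - 1‖ ≤ r := by
  induction n generalizing z r with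
  | zero => simpa using h
  | succ n ih =>
    have hrp : r ^ p ^ (n + 1) = (r ^ p) ^ p ^ n := by rw [← pow_mul, ← pow_succ']
    have hzp : z ^ p ^ (n + 1) = (z ^ p) ^ p ^ n := by rw [← pow_mul, ← pow_succ']
    refine norm_sub_one_le_of_norm_pow_sub_one_le hp hr0 ?_
      (ih (pow_nonneg hr0 p) (pow_le_one₀ hr0 hr1) (hrp ▸ hpr) (hrp ▸ hzp ▸ h))
    refine le_of_pow_le_pow_left₀ hp.ne_zero (by positivity) (hpr.trans ?_)
    rw [← pow_mul, ← pow_mul, mul_comm]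
    exact pow_le_pow_of_le_one hr0 hr1 (Nat.mul_le_mul_left _ (Nat.le_self_pow n.succ_ne_zero _))

end IsUltrametricDist

theorem statement3_general (p : ℕ) [Fact p.Prime]
    {K : Type*} [NormedField K] [Algebra ℚ_[p] K]
    (hnorm : ∀ x : ℚ_[p], ‖(algebraMap ℚ_[p] K) x‖ = ‖x‖)
    (hna : ∀ x y : K, ‖x + y‖ ≤ max ‖x‖ ‖y‖)
    (n : ℕ) (y z : K) (hzy : z ^ (p ^ n) = y)
    (hy : ‖y - 1‖ ≤ (p : ℝ) ^ ((-1 : ℝ) - 1 / ((p : ℝ) - 1))) :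
    ‖z - 1‖ ≤ (p : ℝ) ^ (-(1 : ℝ) / ((p : ℝ) ^ ((n : ℝ) - 1) * ((p : ℝ) - 1))) := by
  have hp : p.Prime := Fact.out
  have hp1 : (1 : ℝ) < p := by exact_mod_cast hp.one_lt
  have hp1' : (p : ℝ) - 1 ≠ 0 := by linarith
  have : IsUltrametricDist K := .isUltrametricDist_of_forall_norm_add_le_max_norm hna
  set r := (p : ℝ) ^ (-(1 : ℝ) / ((p : ℝ) ^ ((n : ℝ) - 1) * ((p : ℝ) - 1)))
  have hr_pow : r ^ p ^ n = (p : ℝ) ^ ((-1 : ℝ) - 1 / ((p : ℝ) - 1)) := by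
    rw [← Real.rpow_natCast, ← Real.rpow_mul (by positivity), Nat.cast_pow,
      ← Real.rpow_natCast (p : ℝ) n, Real.rpow_sub_one (by positivity)]
    congr 1
    field_simp
    ring
  have hr1 : r ≤ 1 := Real.rpow_le_one_of_one_le_of_nonpos hp1.le
    (div_nonpos_of_nonpos_of_nonneg (by norm_num) (by positivity))
  have hpr : ‖(p : K)‖ ^ p = (r ^ p ^ n) ^ (p - 1) := by
    rw [← map_natCast (algebraMap ℚ_[p] K), hnorm, Padic.norm_p, hr_pow, ← Real.rpow_natCast,
      ← Real.rpow_natCast, ← Real.rpow_mul (by positivity), Real.inv_rpow (by positivity),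
      ← Real.rpow_neg (by positivity), Nat.cast_sub hp.one_le, Nat.cast_one]
    congr 1
    field_simp
    ring
  exact IsUltrametricDist.norm_sub_one_le_of_norm_pow_prime_pow_sub_one_le hp n
    (by positivity) hr1 hpr.le (hr_pow ▸ hzy ▸ hy)

/-- If `z^{p^n} = y` and `|y - 1| ≤ p^{-1-1/(p-1)}`, then
`|z - 1| ≤ p^{-1/(p^{n-1}(p-1))}`.  Here `K` plays the role of `ℂ_p`: a complete
algebraically closed nonarchimedean field extension of `ℚ_p` whose norm extends
the `p`-adic norm. -/
theorem statement3 (p : ℕ) [Fact p.Prime] (hodd : Odd p)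
    {K : Type*} [NormedField K] [CompleteSpace K] [IsAlgClosed K] [Algebra ℚ_[p] K]
    (hnorm : ∀ x : ℚ_[p], ‖(algebraMap ℚ_[p] K) x‖ = ‖x‖)
    (hna : ∀ x y : K, ‖x + y‖ ≤ max ‖x‖ ‖y‖)
    (n : ℕ) (y z : K) (hzy : z ^ (p ^ n) = y)
    (hy : ‖y - 1‖ ≤ (p : ℝ) ^ ((-1 : ℝ) - 1 / ((p : ℝ) - 1))) :
    ‖z - 1‖ ≤ (p : ℝ) ^ (-(1 : ℝ) / ((p : ℝ) ^ ((n : ℝ) - 1) * ((p : ℝ) - 1))) :=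
  statement3_general p hnorm hna n y z hzy hy
end

section
/- Let p be an odd prime and n ≥ 0 an integer. For t, t' ∈ ℂ_p with |t - 1| ≤ p^{-1/(p^{n-1}(p-1))} and |t' - 1| ≤ p^{-1/(p^{n-1}(p-1))}, one has log_p(t) = log_p(t') if and only if (t/t')^{p^n} = 1. In particular, the map t ↦ log_p(t)/log_p(1+p) identifies the quotient of the multiplicative group {t ∈ ℂ_p : |t-1| ≤ p^{-1/(p^{n-1}(p-1))}} by its subgroup of p^n-th roots of unity with the additive group {x ∈ ℂ_p : |x| ≤ p^{n-1/(p-1)}}. -/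
/-!
For `‖t - 1‖ < 1`, `log_p (t ^ m) = m log_p t`: the truncations `L_N` of `log (1 + X)` satisfy
`X ^ (N + 1) ∣ L_N ((1 + X) ^ m - 1) - m L_N`, as the derivative computation shows, and this
polynomial has coefficients of norm at most `N`, so its value at `t - 1` tends to `0`.

For `p` odd, `w ↦ log_p (1 + w) - w` is a `p⁻¹`-contraction of the ball `‖w‖ ≤ p⁻¹`, so
`w ↦ log_p (1 + w)` is an isometric bijection of that ball. The map `t ↦ t ^ (p ^ n)` sends the
disc `‖t - 1‖ ≤ p ^ (-1 / (p ^ (n - 1) (p - 1)))` onto `‖t - 1‖ ≤ p ^ (-p / (p - 1))` (binomial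
expansion, and `p`-th roots in an algebraically closed field), and
`log_p (t ^ (p ^ n)) = p ^ n log_p t` then transports all three claims from the small ball to the disc.
-/

open Filter Topology

/-- The `p`-adic logarithm, given by the series
`log_p(t) = ∑_{k ≥ 1} (-1)^(k+1) (t-1)^k / k` (convergent for `‖t - 1‖ < 1`). -/
noncomputable def plog {K : Type*} [NormedField K] (t : K) : K :=
  ∑' k : ℕ, (-1) ^ k * (t - 1) ^ (k + 1) / ((k + 1 : ℕ) : K)

open Polynomial Finset

theorem inv_natCast_prime_lt_one {p : ℕ} [Fact p.Prime] : (p : ℝ)⁻¹ < 1 :=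
  inv_lt_one_of_one_lt₀ (by exact_mod_cast (Fact.out : p.Prime).one_lt)

section NatCast

variable (p : ℕ) [Fact p.Prime] {K : Type*} [NormedField K] [NormedAlgebra ℚ_[p] K]

theorem norm_natCast_eq_inv_pow_padicValNat {k : ℕ} (hk : k ≠ 0) :
    ‖(k : K)‖ = ((p : ℝ) ^ padicValNat p k)⁻¹ := by
  rw [← map_natCast (algebraMap ℚ_[p] K), norm_algebraMap',
    Padic.norm_eq_zpow_neg_valuation (by exact_mod_cast hk), Padic.valuation_natCast, zpow_neg,
    zpow_natCast]

theorem norm_natCast_prime : ‖(p : K)‖ = (p : ℝ)⁻¹ := by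
  rw [← map_natCast (algebraMap ℚ_[p] K), norm_algebraMap', Padic.norm_p]

theorem natCast_prime_ne_zero : (p : K) ≠ 0 :=
  norm_ne_zero_iff.mp <| by
    rw [norm_natCast_prime p]
    exact inv_ne_zero (Nat.cast_ne_zero.mpr (Fact.out : p.Prime).ne_zero)

theorem inv_norm_natCast_le_pow_sub_two (hp : 3 ≤ p) {k : ℕ} (hk : 2 ≤ k) :
    ‖(k : K)‖⁻¹ ≤ (p : ℝ) ^ (k - 2) := by
  rw [norm_natCast_eq_inv_pow_padicValNat p (by omega), inv_inv]
  gcongr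
  · exact_mod_cast (Fact.out : p.Prime).one_le
  · by_contra! h
    have h3 : 3 ^ (k - 1) ≤ k :=
      calc 3 ^ (k - 1) ≤ p ^ (k - 1) := Nat.pow_le_pow_left hp _
        _ ≤ p ^ padicValNat p k := Nat.pow_le_pow_right (by omega) (by omega)
        _ ≤ k := Nat.le_of_dvd (by omega) pow_padicValNat_dvd
    have h4 : k - 1 < 2 ^ (k - 1) := Nat.lt_two_pow_self
    have h5 : 2 ^ (k - 1) < 3 ^ (k - 1) := Nat.pow_lt_pow_left (by norm_num) (by omega)
    omega

end NatCast

theorem norm_natCast_le_one (p : ℕ) [Fact p.Prime] {K : Type*} [NormedField K]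
    [NormedAlgebra ℚ_[p] K] (k : ℕ) : ‖(k : K)‖ ≤ 1 := by
  rw [← map_natCast (algebraMap ℚ_[p] K), norm_algebraMap']
  exact_mod_cast Padic.norm_int_le_one k

theorem inv_norm_natCast_le (p : ℕ) [Fact p.Prime] {K : Type*} [NormedField K]
    [NormedAlgebra ℚ_[p] K] {k : ℕ} (hk : k ≠ 0) : ‖(k : K)‖⁻¹ ≤ k := by
  rw [norm_natCast_eq_inv_pow_padicValNat p hk, inv_inv]
  exact_mod_cast Nat.le_of_dvd (Nat.pos_of_ne_zero hk) pow_padicValNat_dvd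

theorem norm_choose_prime_le (p : ℕ) [Fact p.Prime] {K : Type*} [NormedField K]
    [NormedAlgebra ℚ_[p] K] {k : ℕ} (hk : k ≠ 0) (hkp : k < p) :
    ‖(p.choose k : K)‖ ≤ (p : ℝ)⁻¹ := by
  obtain ⟨c, hc⟩ := (Fact.out : p.Prime).dvd_choose_self hk hkp
  rw [hc, Nat.cast_mul, norm_mul, norm_natCast_prime]
  exact mul_le_of_le_one_right (by positivity) (norm_natCast_le_one p c)

theorem norm_pow_sub_pow_le {K : Type*} [NormedField K] [IsUltrametricDist K] {w w' : K} {r : ℝ}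
    (hw : ‖w‖ ≤ r) (hw' : ‖w'‖ ≤ r) (m : ℕ) :
    ‖w ^ (m + 1) - w' ^ (m + 1)‖ ≤ r ^ m * ‖w - w'‖ := by
  have hr : 0 ≤ r := (norm_nonneg w).trans hw
  rw [← geom_sum₂_mul, norm_mul]
  gcongr
  refine IsUltrametricDist.norm_sum_le_of_forall_le_of_nonneg (by positivity) fun i _ => ?_
  rw [norm_mul, norm_pow, norm_pow]
  calc ‖w‖ ^ i * ‖w'‖ ^ (m + 1 - 1 - i) ≤ r ^ i * r ^ (m + 1 - 1 - i) := by gcongr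
    _ = r ^ m := by rw [← pow_add]; congr 1; grind

section PlogSeries

variable {K : Type*} [NormedField K]

noncomputable def plogTerm (w : K) (k : ℕ) : K := (-1) ^ k * w ^ (k + 1) / ((k + 1 : ℕ) : K)

theorem plog_one_add_eq_tsum (w : K) : plog (1 + w) = ∑' k, plogTerm w k := by
  simp [plog, plogTerm]

theorem plog_one : plog (1 : K) = 0 := by simp [plog]

theorem norm_plogTerm (w : K) (k : ℕ) : ‖plogTerm w k‖ = ‖w‖ ^ (k + 1) / ‖((k + 1 : ℕ) : K)‖ := by
  simp [plogTerm]

variable [IsUltrametricDist K]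

theorem norm_plogTerm_succ_sub_le {p : ℕ} [Fact p.Prime] [NormedAlgebra ℚ_[p] K] (hp : 3 ≤ p)
    {w w' : K} (hw : ‖w‖ ≤ (p : ℝ)⁻¹) (hw' : ‖w'‖ ≤ (p : ℝ)⁻¹) (k : ℕ) :
    ‖plogTerm w (k + 1) - plogTerm w' (k + 1)‖ ≤ (p : ℝ)⁻¹ * ‖w - w'‖ := by
  have hdiff : plogTerm w (k + 1) - plogTerm w' (k + 1)
      = (-1) ^ (k + 1) * (w ^ (k + 2) - w' ^ (k + 2)) / ((k + 2 : ℕ) : K) := by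
    simp only [plogTerm]; ring
  rw [hdiff, norm_div, norm_mul, norm_pow, norm_neg, norm_one, one_pow, one_mul, div_eq_mul_inv]
  calc ‖w ^ (k + 2) - w' ^ (k + 2)‖ * ‖((k + 2 : ℕ) : K)‖⁻¹
      ≤ ((p : ℝ)⁻¹ ^ (k + 1) * ‖w - w'‖) * (p : ℝ) ^ k := by
        gcongr
        · exact norm_pow_sub_pow_le hw hw' (k + 1)
        · simpa using inv_norm_natCast_le_pow_sub_two p (K := K) hp (k := k + 2) (by omega)
    _ = (p : ℝ)⁻¹ * ‖w - w'‖ := by rw [pow_succ, inv_pow]; field_simp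

variable [CompleteSpace K]

theorem summable_plogTerm (p : ℕ) [Fact p.Prime] [NormedAlgebra ℚ_[p] K] {w : K} (hw : ‖w‖ < 1) :
    Summable (plogTerm w) := by
  refine NonarchimedeanAddGroup.summable_of_tendsto_cofinite_zero ?_
  rw [Nat.cofinite_eq_atTop, tendsto_zero_iff_norm_tendsto_zero]
  have hlim := (tendsto_self_mul_const_pow_of_lt_one (norm_nonneg w) hw).comp
    (tendsto_add_atTop_nat 1)
  refine squeeze_zero (fun k => norm_nonneg _) (fun k => ?_) hlim
  rw [norm_plogTerm, div_eq_mul_inv, mul_comm]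
  simpa using mul_le_mul_of_nonneg_right (inv_norm_natCast_le p (K := K) k.succ_ne_zero)
    (pow_nonneg (norm_nonneg w) (k + 1))

theorem plog_one_add_sub_eq_tsum (p : ℕ) [Fact p.Prime] [NormedAlgebra ℚ_[p] K] {w : K}
    (hw : ‖w‖ < 1) : plog (1 + w) - w = ∑' k, plogTerm w (k + 1) := by
  rw [plog_one_add_eq_tsum, (summable_plogTerm p hw).tsum_eq_zero_add]
  simp [plogTerm]

variable {p : ℕ} [Fact p.Prime] [NormedAlgebra ℚ_[p] K]

theorem norm_plog_one_add_sub_sub_le (hp : 3 ≤ p) {w w' : K} (hw : ‖w‖ ≤ (p : ℝ)⁻¹)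
    (hw' : ‖w'‖ ≤ (p : ℝ)⁻¹) :
    ‖(plog (1 + w) - w) - (plog (1 + w') - w')‖ ≤ (p : ℝ)⁻¹ * ‖w - w'‖ := by
  have hinv : (p : ℝ)⁻¹ < 1 := inv_natCast_prime_lt_one
  have hs : Summable fun k => plogTerm w (k + 1) :=
    (summable_nat_add_iff 1).mpr (summable_plogTerm p (hw.trans_lt hinv))
  have hs' : Summable fun k => plogTerm w' (k + 1) :=
    (summable_nat_add_iff 1).mpr (summable_plogTerm p (hw'.trans_lt hinv))
  rw [plog_one_add_sub_eq_tsum p (hw.trans_lt hinv), plog_one_add_sub_eq_tsum p (hw'.trans_lt hinv),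
    ← hs.tsum_sub hs']
  exact IsUltrametricDist.norm_tsum_le_of_forall_le_of_nonneg
    (mul_nonneg (inv_nonneg.mpr (Nat.cast_nonneg p)) (norm_nonneg _))
    (norm_plogTerm_succ_sub_le hp hw hw')

end PlogSeries

section SmallDisc

variable {p : ℕ} [Fact p.Prime] {K : Type*} [NormedField K] [NormedAlgebra ℚ_[p] K]
  [IsUltrametricDist K] [CompleteSpace K]

theorem norm_plog_one_add_sub_le (hp : 3 ≤ p) {w : K} (hw : ‖w‖ ≤ (p : ℝ)⁻¹) :
    ‖plog (1 + w) - w‖ ≤ (p : ℝ)⁻¹ * ‖w‖ := by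
  simpa [plog_one] using norm_plog_one_add_sub_sub_le hp hw (w' := 0) (by simp)

theorem norm_plog_one_add (hp : 3 ≤ p) {w : K} (hw : ‖w‖ ≤ (p : ℝ)⁻¹) : ‖plog (1 + w)‖ = ‖w‖ := by
  rcases eq_or_ne w 0 with rfl | hw0
  · simp [plog_one]
  have hrem : ‖plog (1 + w) - w‖ < ‖w‖ := (norm_plog_one_add_sub_le hp hw).trans_lt
    (mul_lt_of_lt_one_left (norm_pos_iff.mpr hw0) inv_natCast_prime_lt_one)
  rw [← add_sub_cancel w (plog (1 + w)), IsUltrametricDist.norm_add_eq_max_of_norm_ne_norm hrem.ne',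
    max_eq_left hrem.le]

theorem eq_of_plog_one_add_eq (hp : 3 ≤ p) {w w' : K} (hw : ‖w‖ ≤ (p : ℝ)⁻¹)
    (hw' : ‖w'‖ ≤ (p : ℝ)⁻¹) (h : plog (1 + w) = plog (1 + w')) : w = w' := by
  have hle := norm_plog_one_add_sub_sub_le hp hw hw'
  rw [h, sub_sub_sub_cancel_left, norm_sub_rev] at hle
  by_contra hne
  exact (mul_lt_of_lt_one_left (norm_pos_iff.mpr (sub_ne_zero.mpr hne))
    inv_natCast_prime_lt_one).not_ge hle

/-- Banach's fixed point theorem for `w ↦ z - (plog (1 + w) - w)` on the ball `‖w‖ ≤ p⁻¹`. -/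
theorem exists_plog_one_add_eq (hp : 3 ≤ p) {z : K} (hz : ‖z‖ ≤ (p : ℝ)⁻¹) :
    ∃ w : K, ‖w‖ = ‖z‖ ∧ plog (1 + w) = z := by
  set B := Metric.closedBall (0 : K) (p : ℝ)⁻¹
  set f : K → K := fun w => z - (plog (1 + w) - w)
  have hmaps : Set.MapsTo f B B := fun w hw => by
    rw [mem_closedBall_zero_iff] at hw ⊢
    rw [show f w = z + -(plog (1 + w) - w) from sub_eq_add_neg _ _]
    refine (IsUltrametricDist.norm_add_le_max _ _).trans (max_le hz ?_)
    exact norm_neg (plog (1 + w) - w) ▸ (norm_plog_one_add_sub_le hp hw).trans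
      (mul_le_of_le_one_right (inv_nonneg.mpr (Nat.cast_nonneg p))
      (hw.trans inv_natCast_prime_lt_one.le))
  have hcontr : ContractingWith (p : ℝ)⁻¹.toNNReal (hmaps.restrict f B B) := by
    refine ⟨by simpa using inv_natCast_prime_lt_one, LipschitzWith.of_dist_le_mul fun w w' => ?_⟩
    simp only [Subtype.dist_eq, dist_eq_norm, Set.MapsTo.val_restrict_apply, f,
      Real.coe_toNNReal _ (inv_nonneg.mpr (Nat.cast_nonneg p))]
    rw [sub_sub_sub_cancel_left, norm_sub_rev]
    exact norm_plog_one_add_sub_sub_le hp (mem_closedBall_zero_iff.mp w.2)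
      (mem_closedBall_zero_iff.mp w'.2)
  obtain ⟨w, hwB, hfix, -⟩ := hcontr.exists_fixedPoint' Metric.isClosed_closedBall.isComplete
    hmaps (Metric.mem_closedBall_self (by positivity)) (edist_ne_top _ _)
  have hlog : plog (1 + w) = z := by
    have : z - (plog (1 + w) - w) = w := hfix
    linear_combination -this
  exact ⟨w, by rw [← hlog, norm_plog_one_add hp (mem_closedBall_zero_iff.mp hwB)], hlog⟩

end SmallDisc

section TruncatedLog

variable (F : Type*) [Field F]

noncomputable def logTrunc (N : ℕ) : F[X] :=
  ∑ k ∈ range N, C ((-1) ^ k / ((k + 1 : ℕ) : F)) * X ^ (k + 1)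

/-- Truncation of `log ((1 + X) ^ m) - m * log (1 + X)`, a power series that vanishes. -/
noncomputable def logPowDefect (m N : ℕ) : F[X] :=
  (logTrunc F N).comp ((1 + X) ^ m - 1) - C (m : F) * logTrunc F N

variable {F}

theorem logPowDefect_eq_sum (m N : ℕ) :
    logPowDefect F m N = ∑ k ∈ range N, C ((-1) ^ k / ((k + 1 : ℕ) : F)) *
      (((1 + X) ^ m - 1) ^ (k + 1) - C (m : F) * X ^ (k + 1)) := by
  simp [logPowDefect, logTrunc, comp_eq_aeval, mul_sub, mul_sum, mul_left_comm]

variable [CharZero F]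

theorem one_add_X_mul_derivative_logTrunc (N : ℕ) :
    (1 + X) * derivative (logTrunc F N) = 1 - (-X) ^ N := by
  have hderiv : derivative (logTrunc F N) = ∑ i ∈ range N, (-X) ^ i := by
    refine (derivative_sum).trans (sum_congr rfl fun k _ => ?_)
    rw [derivative_C_mul_X_pow, div_mul_cancel₀ _ (Nat.cast_ne_zero.mpr k.succ_ne_zero),
      Nat.add_sub_cancel, map_pow, map_neg, map_one, neg_pow (X : F[X])]
  rw [hderiv, ← mul_neg_geom_sum, sub_neg_eq_add]

theorem one_add_X_mul_derivative_one_add_X_pow (m : ℕ) :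
    (1 + X : F[X]) * derivative ((1 + X) ^ m) = C (m : F) * (1 + X) ^ m := by
  cases m with
  | zero => simp
  | succ m =>
    simp only [derivative_pow_succ, derivative_one, derivative_X, zero_add,
      mul_one, Nat.cast_add, Nat.cast_one, map_add, map_natCast, map_one]
    ring

theorem X_pow_succ_dvd_of_X_pow_dvd_derivative {P : F[X]} {N : ℕ} (hd : X ^ N ∣ derivative P)
    (h0 : P.coeff 0 = 0) : X ^ (N + 1) ∣ P := by
  rw [X_pow_dvd_iff] at hd ⊢
  rintro (_ | d) hd'
  · exact h0
  · have := hd d (by omega)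
    rw [coeff_derivative] at this
    exact (mul_eq_zero.mp this).resolve_right (by exact_mod_cast d.succ_ne_zero)

theorem X_pow_succ_dvd_logPowDefect (m N : ℕ) : X ^ (N + 1) ∣ logPowDefect F m N := by
  set U : F[X] := (1 + X) ^ m - 1
  have hU : (1 + X) * derivative U = C (m : F) * (1 + X).comp U := by
    simp [U, one_add_X_mul_derivative_one_add_X_pow]
  have hkey : (1 + X) * derivative (logPowDefect F m N) = C (m : F) * ((-X) ^ N - (-U) ^ N) := by
    have hcomp := congrArg (fun P => P.comp U) (one_add_X_mul_derivative_logTrunc (F := F) N)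
    simp only [sub_comp, one_comp, pow_comp, neg_comp, X_comp] at hcomp
    rw [logPowDefect, derivative_sub, derivative_comp, derivative_C_mul, mul_sub,
      ← mul_assoc, hU, mul_assoc, ← mul_comp, hcomp, mul_left_comm,
      one_add_X_mul_derivative_logTrunc]
    ring
  have hXU : (X : F[X]) ∣ U := by simp [U, X_dvd_iff, coeff_zero_eq_eval_zero]
  have hcop : IsCoprime ((X : F[X]) ^ N) (1 + X) :=
    IsCoprime.pow_left (⟨-1, 1, by ring⟩ : IsCoprime (X : F[X]) (1 + X))
  refine X_pow_succ_dvd_of_X_pow_dvd_derivative (hcop.dvd_of_dvd_mul_left ?_) ?_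
  · rw [hkey, neg_pow (X : F[X])]
    exact dvd_mul_of_dvd_right
      (dvd_sub (dvd_mul_left _ _) (pow_dvd_pow_of_dvd (dvd_neg.mpr hXU) N)) _
  · simp [logPowDefect, logTrunc, coeff_zero_eq_eval_zero, eval_finsetSum]

end TruncatedLog

theorem norm_aeval_le_of_X_pow_dvd {𝕜 K : Type*} [NormedField 𝕜] [NormedField K]
    [NormedAlgebra 𝕜 K] [IsUltrametricDist K] {P : 𝕜[X]} {n : ℕ} (hP : X ^ n ∣ P) {c : ℝ}
    (hc : ∀ i, ‖P.coeff i‖ ≤ c) {w : K} (hw : ‖w‖ ≤ 1) : ‖aeval w P‖ ≤ c * ‖w‖ ^ n := by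
  have hc0 : 0 ≤ c := (norm_nonneg _).trans (hc 0)
  rw [aeval_eq_sum_range]
  refine IsUltrametricDist.norm_sum_le_of_forall_le_of_nonneg (by positivity) fun i _ => ?_
  by_cases hi : i < n
  · simp only [X_pow_dvd_iff.mp hP i hi, zero_smul, norm_zero]
    positivity
  · rw [norm_smul, norm_pow]
    exact mul_le_mul (hc i) (pow_le_pow_of_le_one (norm_nonneg w) hw (not_lt.mp hi))
      (by positivity) hc0

section PlogPow

variable {p : ℕ} [Fact p.Prime]

theorem norm_coeff_logPowDefect_le (m N i : ℕ) : ‖(logPowDefect ℚ_[p] m N).coeff i‖ ≤ N := by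
  rw [logPowDefect_eq_sum, finsetSum_coeff]
  refine IsUltrametricDist.norm_sum_le_of_forall_le_of_nonneg (Nat.cast_nonneg N) fun k hk => ?_
  have hint : (((1 + X) ^ m - 1) ^ (k + 1) - C (m : ℚ_[p]) * X ^ (k + 1) : ℚ_[p][X]) =
      ((((1 + X) ^ m - 1) ^ (k + 1) - C (m : ℤ) * X ^ (k + 1) : ℤ[X])).map (Int.castRingHom _) := by
    simp
  rw [coeff_C_mul, hint, coeff_map, norm_mul, norm_div, norm_pow, norm_neg, norm_one, one_pow,
    one_div]
  calc ‖((k + 1 : ℕ) : ℚ_[p])‖⁻¹ * ‖(Int.castRingHom ℚ_[p]) _‖ ≤ (k + 1 : ℕ) * 1 := by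
        gcongr
        · exact inv_norm_natCast_le p k.succ_ne_zero
        · exact Padic.norm_int_le_one _
    _ ≤ N := by rw [mul_one]; exact Nat.cast_le.mpr (mem_range.mp hk)

variable {K : Type*} [NormedField K] [NormedAlgebra ℚ_[p] K]

theorem aeval_logTrunc (w : K) (N : ℕ) :
    aeval w (logTrunc ℚ_[p] N) = ∑ k ∈ range N, plogTerm w k := by
  simp only [logTrunc, map_sum, map_mul, aeval_C, map_pow, aeval_X]
  refine sum_congr rfl fun k _ => ?_
  rw [plogTerm, map_div₀, map_pow, map_neg, map_one, map_natCast]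
  ring

end PlogPow

theorem norm_pow_sub_one_le {K : Type*} [NormedField K] [IsUltrametricDist K] {t : K}
    (ht : ‖t - 1‖ ≤ 1) (m : ℕ) : ‖t ^ m - 1‖ ≤ ‖t - 1‖ := by
  have ht1 : ‖t‖ ≤ 1 := by
    simpa using (IsUltrametricDist.norm_add_le_max (t - 1) 1).trans (max_le ht norm_one.le)
  rw [← geom_sum_mul, norm_mul]
  refine mul_le_of_le_one_left (norm_nonneg _) ?_
  exact IsUltrametricDist.norm_sum_le_of_forall_le_of_nonneg zero_le_one fun i _ => by
    simpa using pow_le_one₀ (norm_nonneg t) ht1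

theorem plog_pow (p : ℕ) [Fact p.Prime] {K : Type*} [NormedField K] [NormedAlgebra ℚ_[p] K]
    [IsUltrametricDist K] [CompleteSpace K] {t : K} (ht : ‖t - 1‖ < 1) (m : ℕ) :
    plog (t ^ m) = m * plog t := by
  set w := t - 1
  have htm : ‖t ^ m - 1‖ < 1 := (norm_pow_sub_one_le ht.le m).trans_lt ht
  have hsum (u : K) (hu : ‖u - 1‖ < 1) :
      Tendsto (fun N => ∑ k ∈ range N, plogTerm (u - 1) k) atTop (𝓝 (plog u)) := by
    rw [← add_sub_cancel 1 u, plog_one_add_eq_tsum, add_sub_cancel_left]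
    exact (summable_plogTerm p hu).hasSum.tendsto_sum_nat
  have hdefect : Tendsto (fun N => aeval w (logPowDefect ℚ_[p] m N)) atTop (𝓝 0) := by
    rw [tendsto_zero_iff_norm_tendsto_zero]
    refine squeeze_zero (fun _ => norm_nonneg _) (fun N => ?_)
      (by simpa using (tendsto_self_mul_const_pow_of_lt_one (norm_nonneg w) ht).mul_const ‖w‖)
    rw [mul_assoc, ← pow_succ]
    exact norm_aeval_le_of_X_pow_dvd (X_pow_succ_dvd_logPowDefect m N)
      (norm_coeff_logPowDefect_le m N) ht.le
  have haeval : ∀ N, aeval w (logPowDefect ℚ_[p] m N) =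
      ∑ k ∈ range N, plogTerm (t ^ m - 1) k - m * ∑ k ∈ range N, plogTerm w k := fun N => by
    simp [logPowDefect, aeval_comp, aeval_logTrunc, w]
  simp only [haeval] at hdefect
  exact sub_eq_zero.mp (tendsto_nhds_unique ((hsum _ htm).sub ((hsum t ht).const_mul _)) hdefect)

section DiscRadius

noncomputable def discRadius (p n : ℕ) : ℝ :=
  (p : ℝ) ^ (-(1 : ℝ) / ((p : ℝ) ^ ((n : ℝ) - 1) * ((p : ℝ) - 1)))

variable {p : ℕ} (hp : 1 < p)
include hp

theorem discRadius_eq (n : ℕ) :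
    discRadius p n = (p : ℝ) ^ (-(p : ℝ) / ((p : ℝ) ^ n * (p - 1))) := by
  have hp0 : (0 : ℝ) < p := by positivity
  rw [discRadius, Real.rpow_sub hp0, Real.rpow_one, Real.rpow_natCast]
  congr 1
  field_simp

theorem discRadius_pos (n : ℕ) : 0 < discRadius p n :=
  Real.rpow_pos_of_pos (by positivity) _

theorem discRadius_lt_one (n : ℕ) : discRadius p n < 1 := by
  rw [discRadius_eq hp]
  have : (1 : ℝ) < p := by exact_mod_cast hp
  exact Real.rpow_lt_one_of_one_lt_of_neg this
    (div_neg_of_neg_of_pos (by linarith) (by have := sub_pos.mpr this; positivity))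

theorem discRadius_succ_pow (n : ℕ) : discRadius p (n + 1) ^ p = discRadius p n := by
  have hp0 : (0 : ℝ) < p := by positivity
  rw [discRadius_eq hp, discRadius_eq hp, ← Real.rpow_natCast, ← Real.rpow_mul hp0.le]
  congr 1
  field_simp
  ring

theorem inv_mul_discRadius_succ_le (n : ℕ) :
    (p : ℝ)⁻¹ * discRadius p (n + 1) ≤ discRadius p n := by
  have hp1 : (1 : ℝ) < p := by exact_mod_cast hp
  have hp0 : (0 : ℝ) < p := by positivity
  rw [discRadius_eq hp, discRadius_eq hp, ← Real.rpow_neg_one, ← Real.rpow_add hp0]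
  refine Real.rpow_le_rpow_of_exponent_le hp1.le ?_
  have hpn : (1 : ℝ) ≤ (p : ℝ) ^ n := one_le_pow₀ hp1.le
  have hq : (0 : ℝ) < p - 1 := by linarith
  have hA : 0 < (p : ℝ) ^ n * (p - 1) := by positivity
  have hsucc : (p : ℝ) / ((p : ℝ) ^ (n + 1) * (p - 1)) = 1 / ((p : ℝ) ^ n * (p - 1)) := by
    rw [pow_succ]; field_simp
  have hsplit : (p : ℝ) / ((p : ℝ) ^ n * (p - 1))
      = 1 / ((p : ℝ) ^ n * (p - 1)) + ((p : ℝ) - 1) / ((p : ℝ) ^ n * (p - 1)) := by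
    rw [← add_div]; ring_nf
  have hle : ((p : ℝ) - 1) / ((p : ℝ) ^ n * (p - 1)) ≤ 1 :=
    (div_le_one hA).mpr (le_mul_of_one_le_left hq.le hpn)
  rw [neg_div, neg_div, hsucc, hsplit]
  linarith

theorem discRadius_zero_le_inv : discRadius p 0 ≤ (p : ℝ)⁻¹ := by
  have hp1 : (1 : ℝ) < p := by exact_mod_cast hp
  rw [discRadius_eq hp, ← Real.rpow_neg_one]
  refine Real.rpow_le_rpow_of_exponent_le hp1.le ?_
  have hq : (0 : ℝ) < p - 1 := by linarith
  rw [pow_zero, one_mul, neg_div, neg_le_neg_iff, le_div_iff₀ hq]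
  linarith

theorem pow_mul_discRadius_zero (n : ℕ) :
    (p : ℝ) ^ n * p * discRadius p 0 = (p : ℝ) ^ ((n : ℝ) - 1 / ((p : ℝ) - 1)) := by
  have hp0 : (0 : ℝ) < p := by positivity
  have hp1 : (p : ℝ) - 1 ≠ 0 := sub_ne_zero.mpr (by exact_mod_cast hp.ne')
  rw [discRadius_eq hp, ← Real.rpow_natCast, ← Real.rpow_add_one hp0.ne', ← Real.rpow_add hp0]
  congr 1
  field_simp
  ring

end DiscRadius

theorem norm_sub_one_lt_one_of_le_discRadius {p : ℕ} [Fact p.Prime] {K : Type*} [NormedField K]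
    {n : ℕ} {t : K} (ht : ‖t - 1‖ ≤ discRadius p n) : ‖t - 1‖ < 1 :=
  ht.trans_lt (discRadius_lt_one (Fact.out : p.Prime).one_lt n)

section Discs

variable {K : Type*} [NormedField K] [IsUltrametricDist K]

theorem norm_pow_prime_sub_one_le (p : ℕ) [Fact p.Prime] [NormedAlgebra ℚ_[p] K] {t : K}
    (ht : ‖t - 1‖ ≤ 1) : ‖t ^ p - 1‖ ≤ max ((p : ℝ)⁻¹ * ‖t - 1‖) (‖t - 1‖ ^ p) := by
  set w := t - 1
  have hexpand : t ^ p - 1 = ∑ k ∈ range p, w ^ (k + 1) * (p.choose (k + 1) : K) := by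
    rw [show t = w + 1 by simp [w], add_pow, sum_range_succ']
    simp
  rw [hexpand]
  refine IsUltrametricDist.norm_sum_le_of_forall_le_of_nonneg (by positivity) fun k hk => ?_
  rw [norm_mul, norm_pow]
  rcases (show k + 1 ≤ p from mem_range.mp hk).eq_or_lt with hkp | hkp
  · rw [hkp, Nat.choose_self, Nat.cast_one, norm_one, mul_one]
    exact le_max_right _ _
  · refine le_max_of_le_left ?_
    rw [mul_comm]
    exact mul_le_mul (norm_choose_prime_le p k.succ_ne_zero hkp)
      (pow_le_of_le_one (norm_nonneg w) ht k.succ_ne_zero) (by positivity) (by positivity)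

variable {p : ℕ} [Fact p.Prime] [NormedAlgebra ℚ_[p] K]

theorem norm_pow_prime_sub_one_le_discRadius {n : ℕ} {t : K} (ht : ‖t - 1‖ ≤ discRadius p (n + 1)) :
    ‖t ^ p - 1‖ ≤ discRadius p n := by
  have hp := (Fact.out : p.Prime).one_lt
  refine (norm_pow_prime_sub_one_le p (ht.trans (discRadius_lt_one hp _).le)).trans (max_le ?_ ?_)
  · exact (mul_le_mul_of_nonneg_left ht (by positivity)).trans (inv_mul_discRadius_succ_le hp n)
  · exact (pow_le_pow_left₀ (norm_nonneg _) ht p).trans (discRadius_succ_pow hp n).le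

theorem norm_pow_prime_pow_sub_one_le {n : ℕ} {t : K} (ht : ‖t - 1‖ ≤ discRadius p n) :
    ‖t ^ p ^ n - 1‖ ≤ discRadius p 0 := by
  induction n generalizing t with
  | zero => simpa using ht
  | succ n ih => rw [pow_succ', pow_mul]; exact ih (norm_pow_prime_sub_one_le_discRadius ht)

theorem norm_pow_prime_pow_sub_one_le_inv {n : ℕ} {t : K} (ht : ‖t - 1‖ ≤ discRadius p n) :
    ‖t ^ p ^ n - 1‖ ≤ (p : ℝ)⁻¹ :=
  (norm_pow_prime_pow_sub_one_le ht).trans (discRadius_zero_le_inv (Fact.out : p.Prime).one_lt)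

end Discs

section Roots

variable {K : Type*} [NormedField K] [IsAlgClosed K]

/-- `‖a - 1‖` is the product of the distances from `1` to the `m`-th roots of `a`. -/
theorem exists_pow_eq_norm_sub_one_le {a : K} {m : ℕ} (hm : m ≠ 0) {c : ℝ} (hc : 0 ≤ c)
    (ha : ‖a - 1‖ ≤ c ^ m) : ∃ r : K, r ^ m = a ∧ ‖r - 1‖ ≤ c := by
  set f : K[X] := X ^ m - C a
  have hmonic : f.Monic := monic_X_pow_sub_C a hm
  have hsplit : f.Splits := IsAlgClosed.splits f
  have hcard : Multiset.card f.roots = m := by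
    rw [splits_iff_card_roots.mp hsplit, natDegree_X_pow_sub_C]
  have hroots : f.roots ≠ 0 := fun h => hm (by simpa [h] using hcard.symm)
  obtain ⟨r, hr, hmin⟩ := Multiset.exists_min_image (fun r => ‖1 - r‖₊) hroots
  have hrm : r ^ m = a := by
    simpa [f, sub_eq_zero] using isRoot_of_mem_roots hr
  have heval : ‖1 - a‖₊ = (f.roots.map fun r => ‖1 - r‖₊).prod := by
    have h1 : f.eval 1 = (f.roots.map fun r => 1 - r).prod := by
      conv_lhs => rw [hsplit.eq_prod_roots_of_monic hmonic]
      simp [eval_multiset_prod, Multiset.map_map]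
    rw [show 1 - a = f.eval 1 by simp [f], h1, ← nnnormHom_apply, map_multiset_prod,
      Multiset.map_map]
    rfl
  refine ⟨r, hrm, ?_⟩
  have hpow : ‖1 - r‖₊ ^ m ≤ ‖1 - a‖₊ := by
    rw [heval, ← hcard, ← Multiset.card_map (fun r => ‖1 - r‖₊)]
    exact Multiset.pow_card_le_prod fun x hx => by
      obtain ⟨y, hy, rfl⟩ := Multiset.mem_map.mp hx
      exact hmin y hy
  rw [norm_sub_rev]
  rw [norm_sub_rev] at ha
  have : ‖1 - r‖ ^ m ≤ c ^ m := le_trans (by exact_mod_cast hpow) ha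
  exact (pow_le_pow_iff_left₀ (norm_nonneg _) hc hm).mp this

theorem exists_pow_prime_pow_eq {p : ℕ} [Fact p.Prime] {a : K} (ha : ‖a - 1‖ ≤ discRadius p 0)
    (n : ℕ) : ∃ t : K, t ^ p ^ n = a ∧ ‖t - 1‖ ≤ discRadius p n := by
  have hp := (Fact.out : p.Prime).one_lt
  induction n with
  | zero => exact ⟨a, by simp, ha⟩
  | succ n ih =>
    obtain ⟨s, hs, hsn⟩ := ih
    obtain ⟨t, ht, htn⟩ := exists_pow_eq_norm_sub_one_le (by omega) (discRadius_pos hp (n + 1)).le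
      (hsn.trans_eq (discRadius_succ_pow hp n).symm)
    exact ⟨t, by rw [pow_succ', pow_mul, ht, hs], htn⟩

end Roots

section LogOnDisc

variable {p : ℕ} [Fact p.Prime] {K : Type*} [NormedField K] [NormedAlgebra ℚ_[p] K]
  [IsUltrametricDist K] [CompleteSpace K] {n : ℕ}

theorem natCast_pow_mul_plog {t : K} (ht : ‖t - 1‖ ≤ discRadius p n) :
    (p : K) ^ n * plog t = plog (1 + (t ^ p ^ n - 1)) := by
  rw [add_sub_cancel, plog_pow p (norm_sub_one_lt_one_of_le_discRadius ht), Nat.cast_pow]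

theorem plog_eq_plog_iff (hp : 3 ≤ p) {t t' : K} (ht : ‖t - 1‖ ≤ discRadius p n)
    (ht' : ‖t' - 1‖ ≤ discRadius p n) : plog t = plog t' ↔ (t / t') ^ p ^ n = 1 := by
  have ht'0 : t' ≠ 0 := by
    rintro rfl
    simpa using norm_sub_one_lt_one_of_le_discRadius ht'
  have hpn : (p : K) ^ n ≠ 0 := pow_ne_zero _ (natCast_prime_ne_zero p)
  rw [div_pow, div_eq_one_iff_eq (pow_ne_zero _ ht'0), ← mul_right_inj' hpn,
    natCast_pow_mul_plog ht, natCast_pow_mul_plog ht']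
  refine ⟨fun h => ?_, fun h => by rw [h]⟩
  simpa using eq_of_plog_one_add_eq hp (norm_pow_prime_pow_sub_one_le_inv ht)
    (norm_pow_prime_pow_sub_one_le_inv ht') h

theorem norm_plog_le (hp : 3 ≤ p) {t : K} (ht : ‖t - 1‖ ≤ discRadius p n) :
    ‖plog t‖ ≤ (p : ℝ) ^ n * discRadius p 0 := by
  have h := congrArg norm (natCast_pow_mul_plog ht)
  rw [norm_mul, norm_pow, norm_natCast_prime p, norm_plog_one_add hp
    (norm_pow_prime_pow_sub_one_le_inv ht), inv_pow] at h
  rw [← inv_mul_le_iff₀ (by positivity), h]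
  exact norm_pow_prime_pow_sub_one_le ht

theorem exists_plog_eq [IsAlgClosed K] (hp : 3 ≤ p) {y : K}
    (hy : ‖y‖ ≤ (p : ℝ) ^ n * discRadius p 0) :
    ∃ t : K, ‖t - 1‖ ≤ discRadius p n ∧ plog t = y := by
  have hp1 := (Fact.out : p.Prime).one_lt
  have hz : ‖(p : K) ^ n * y‖ ≤ discRadius p 0 := by
    rw [norm_mul, norm_pow, norm_natCast_prime p, inv_pow, inv_mul_le_iff₀ (by positivity)]
    exact hy
  obtain ⟨w, hw, hwz⟩ := exists_plog_one_add_eq hp (hz.trans (discRadius_zero_le_inv hp1))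
  obtain ⟨t, htw, ht⟩ := exists_pow_prime_pow_eq (a := 1 + w) (by simpa [hw] using hz) n
  refine ⟨t, ht, mul_left_cancel₀ (pow_ne_zero n (natCast_prime_ne_zero p)) ?_⟩
  rw [natCast_pow_mul_plog ht, htw, add_sub_cancel, hwz]

end LogOnDisc

/-- Theorem `quotstructure` on points: for `t, t'` in the disk
`|t - 1| ≤ p^{-1/(p^{n-1}(p-1))}`, one has `log_p t = log_p t'` iff
`(t/t')^{p^n} = 1`; moreover `t ↦ log_p(t)/log_p(1+p)` maps this disk onto the ball
`|x| ≤ p^{n-1/(p-1)}`, identifying the quotient of the disk (a multiplicative group)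
by its `p^n`-th roots of unity with that additive ball.
Here `K` plays the role of `ℂ_p`. -/
theorem statement4 (p : ℕ) [Fact p.Prime] (hodd : Odd p)
    {K : Type*} [NormedField K] [CompleteSpace K] [IsAlgClosed K] [Algebra ℚ_[p] K]
    (hnorm : ∀ x : ℚ_[p], ‖(algebraMap ℚ_[p] K) x‖ = ‖x‖)
    (hna : ∀ x y : K, ‖x + y‖ ≤ max ‖x‖ ‖y‖)
    (n : ℕ) :
    (∀ t t' : K,
        ‖t - 1‖ ≤ (p : ℝ) ^ (-(1 : ℝ) / ((p : ℝ) ^ ((n : ℝ) - 1) * ((p : ℝ) - 1))) →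
        ‖t' - 1‖ ≤ (p : ℝ) ^ (-(1 : ℝ) / ((p : ℝ) ^ ((n : ℝ) - 1) * ((p : ℝ) - 1))) →
        (plog t = plog t' ↔ (t / t') ^ (p ^ n) = 1)) ∧
    (∀ t : K,
        ‖t - 1‖ ≤ (p : ℝ) ^ (-(1 : ℝ) / ((p : ℝ) ^ ((n : ℝ) - 1) * ((p : ℝ) - 1))) →
        ‖plog t / plog (1 + (p : K))‖ ≤ (p : ℝ) ^ ((n : ℝ) - 1 / ((p : ℝ) - 1))) ∧
    (∀ x : K, ‖x‖ ≤ (p : ℝ) ^ ((n : ℝ) - 1 / ((p : ℝ) - 1)) →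
        ∃ t : K,
          ‖t - 1‖ ≤ (p : ℝ) ^ (-(1 : ℝ) / ((p : ℝ) ^ ((n : ℝ) - 1) * ((p : ℝ) - 1))) ∧
          plog t / plog (1 + (p : K)) = x) := by
  let _ : NormedAlgebra ℚ_[p] K :=
    { norm_smul_le := fun c x => by rw [Algebra.smul_def, norm_mul, hnorm] }
  have _ : IsUltrametricDist K := .isUltrametricDist_of_forall_norm_add_le_max_norm hna
  have hp1 := (Fact.out : p.Prime).one_lt
  have hp : 3 ≤ p := by
    obtain ⟨k, rfl⟩ := hodd
    have := (Fact.out : (2 * k + 1).Prime).two_le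
    omega
  have hlogp : ‖plog (1 + (p : K))‖ = (p : ℝ)⁻¹ := by
    rw [norm_plog_one_add hp (norm_natCast_prime p).le, norm_natCast_prime p]
  have hlogp0 : plog (1 + (p : K)) ≠ 0 := norm_ne_zero_iff.mp (by rw [hlogp]; positivity)
  refine ⟨fun t t' => plog_eq_plog_iff hp, fun t ht => ?_, fun x hx => ?_⟩
  · rw [norm_div, hlogp, div_inv_eq_mul, ← pow_mul_discRadius_zero hp1, mul_right_comm]
    exact mul_le_mul_of_nonneg_right (norm_plog_le hp ht) (Nat.cast_nonneg p)
  · obtain ⟨t, ht, hlog⟩ := exists_plog_eq hp (y := x * plog (1 + (p : K))) (n := n) (by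
      rw [norm_mul, hlogp, ← div_eq_mul_inv, div_le_iff₀ (by positivity), mul_right_comm,
        pow_mul_discRadius_zero hp1]
      exact hx)
    exact ⟨t, ht, by rw [hlog, mul_div_cancel_right₀ _ hlogp0]⟩
end

section
/- Let p be an odd prime, R > 0 of the form p^q with q rational, and let μ, ν be bounded distributions on the Tate algebra of radius R over ℂ_p. For f in the Tate algebra and c ∈ ℂ_p with |c| ≤ R, the translate T_c f(x) = f(x + c) again lies in the Tate algebra of radius R, and the function c ↦ ν(T_c f) lies in the Tate algebra of radius R. The convolution (μ*ν)(f) = μ(c ↦ ν(T_c f)) is a well-defined bounded distribution on the Tate algebra of radius R, and its moments are given by (μ*ν)(x^k) = Σ_{m=0}^{k} binom(k,m) μ(x^m) ν(x^{k-m}) for all k ≥ 0. -/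
open Filter Topology

/-- A coefficient sequence belongs to the Tate algebra of radius `R`:
`‖a k‖ R^k → 0`. -/
def IsTate {K : Type*} [NormedField K] (R : ℝ) (a : ℕ → K) : Prop :=
  Filter.Tendsto (fun k => ‖a k‖ * R ^ k) Filter.atTop (nhds 0)

/-- The (Gauss = sup) norm on the Tate algebra of radius `R`:
`‖∑ a_k x^k‖ = sup_k ‖a_k‖ R^k`. -/
noncomputable def tateNorm {K : Type*} [NormedField K] (R : ℝ) (a : ℕ → K) : ℝ :=
  ⨆ k : ℕ, ‖a k‖ * R ^ k

/-- A bounded distribution on the Tate algebra of radius `R` over `K`: a `K`-linear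
functional on the Tate algebra (identified with its coefficient sequences) that is
bounded with respect to the Gauss norm. -/
structure BDist (K : Type*) [NormedField K] (R : ℝ) where
  toFun : {a : ℕ → K // IsTate R a} → K
  map_add' : ∀ a b c : {a : ℕ → K // IsTate R a},
    (c : ℕ → K) = (a : ℕ → K) + (b : ℕ → K) → toFun c = toFun a + toFun b
  map_smul' : ∀ (r : K) (a b : {a : ℕ → K // IsTate R a}),
    (b : ℕ → K) = r • (a : ℕ → K) → toFun b = r * toFun a
  bound' : ∃ C : ℝ, ∀ a : {a : ℕ → K // IsTate R a}, ‖toFun a‖ ≤ C * tateNorm R (a : ℕ → K)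

/-- The monomial `x^k` as an element of the Tate algebra of radius `R`. -/
noncomputable def tateMono {K : Type*} [NormedField K] (R : ℝ) (k : ℕ) :
    {a : ℕ → K // IsTate R a} :=
  ⟨fun j => if j = k then 1 else 0, by
    apply Filter.Tendsto.congr' _ tendsto_const_nhds
    filter_upwards [Filter.eventually_ge_atTop (k + 1)] with j hj
    have hjk : j ≠ k := by omega
    simp [hjk]⟩

/-- The coefficient sequence of the translate `T_c f(x) = f(x+c)` of the power
series with coefficients `a`. -/
noncomputable def tateTranslate {K : Type*} [NormedField K] (a : ℕ → K) (c : K) : ℕ → K :=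
  fun m => ∑' k : ℕ, a (m + k) * ((m + k).choose m : K) * c ^ k

/-!
Taylor's formula `T_c f = ∑_k c^k D^{(k)} f`, with `D^{(k)}` the Hasse derivatives, converges in
the Gauss norm: the coefficients `C(m+k, k) a_{m+k}` of `D^{(k)} f` have norm at most `|a_{m+k}|`
because the norm is ultrametric, so the tail after `N` terms is bounded by
`sup_{j ≥ N} |a_j| R^j`. Applying the bounded `ν` term by term gives
`ν(T_c f) = ∑_k ν(D^{(k)} f) c^k`, whose coefficients lie in the Tate algebra with Gauss norm at
most `C_ν ‖f‖`; so `μ * ν` is a bounded distribution. Since `|p| < 1`, the field is nontrivially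
normed and the identity theorem shows that any `g` with `∑ g_m c^m = ν(T_c f)` on the disc has
these coefficients. For `f = x^k` the Hasse derivatives are `C(k, j) x^{k-j}`, which gives the
moments.
-/

lemma Summable.tsum_eq_tsum_sum_antidiagonal {α : Type*} [AddCommMonoid α] [TopologicalSpace α]
    [ContinuousAdd α] [T3Space α] {f : ℕ × ℕ → α} (hf : Summable f) :
    ∑' p, f p = ∑' n, ∑ p ∈ Finset.HasAntidiagonal.antidiagonal n, f p := by
  rw [← Finset.HasAntidiagonal.sigmaAntidiagonalEquivProd.tsum_eq]
  conv_rhs => congr; ext; rw [← Finset.sum_finset_coe, ← tsum_fintype (L := .unconditional _)]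
  exact (Finset.HasAntidiagonal.sigmaAntidiagonalEquivProd.summable_iff.2 hf).tsum_sigma'
    fun n => (hasSum_fintype _).summable

lemma tendsto_add_cofinite_atTop : Tendsto (fun p : ℕ × ℕ => p.1 + p.2) cofinite atTop := by
  rw [← Nat.cofinite_eq_atTop]
  refine Tendsto.cofinite_of_finite_preimage_singleton fun n => ?_
  exact ((Finset.HasAntidiagonal.antidiagonal n).finite_toSet.subset
    fun p hp => by simpa using hp).to_subtype

section

variable {K : Type*} [NormedField K] {R : ℝ}

lemma isTate_zero : IsTate R (0 : ℕ → K) := by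
  simp [IsTate]

lemma IsTate.add {a b : ℕ → K} (ha : IsTate R a) (hb : IsTate R b) : IsTate R (a + b) := by
  refine squeeze_zero_norm (fun k => ?_) (by simpa using ha.norm.add hb.norm)
  simp only [Pi.add_apply, norm_mul, norm_pow, Real.norm_eq_abs, abs_norm, ← add_mul]
  gcongr
  exact norm_add_le _ _

lemma IsTate.const_smul {a : ℕ → K} (r : K) (ha : IsTate R a) : IsTate R (r • a) := by
  simpa [IsTate, mul_assoc] using ha.const_mul ‖r‖

variable (K R) in
def tateSubmodule : Submodule K (ℕ → K) where
  carrier := {a | IsTate R a}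
  add_mem' := IsTate.add
  zero_mem' := isTate_zero
  smul_mem' r _ := IsTate.const_smul r

lemma IsTate.tendsto_zero_of_tail_bound {E : Type*} [SeminormedAddCommGroup E] {a : ℕ → K}
    (ha : IsTate R a) {u : ℕ → E} {C : ℝ}
    (hu : ∀ N B, 0 ≤ B → (∀ j, N ≤ j → ‖a j‖ * R ^ j ≤ B) → ‖u N‖ ≤ C * B) :
    Tendsto u atTop (𝓝 0) := by
  rw [NormedAddGroup.tendsto_nhds_zero]
  intro ε hε
  have hδ : 0 < ε / (|C| + 1) := by positivity
  obtain ⟨N, hN⟩ := eventually_atTop.1 (NormedAddGroup.tendsto_nhds_zero.1 ha _ hδ)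
  filter_upwards [eventually_ge_atTop N] with n hn
  calc ‖u n‖ ≤ C * (ε / (|C| + 1)) :=
        hu n _ hδ.le fun j hj => (le_abs_self _).trans (hN j (hn.trans hj)).le
    _ ≤ |C| * (ε / (|C| + 1)) := by gcongr; exact le_abs_self C
    _ < (|C| + 1) * (ε / (|C| + 1)) := by gcongr; linarith
    _ = ε := by field_simp

lemma tateNorm_nonneg (hR : 0 ≤ R) (a : ℕ → K) : 0 ≤ tateNorm R a :=
  Real.iSup_nonneg fun _ => by positivity

lemma tateNorm_le {a : ℕ → K} {B : ℝ} (hB : 0 ≤ B) (h : ∀ k, ‖a k‖ * R ^ k ≤ B) :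
    tateNorm R a ≤ B :=
  Real.iSup_le h hB

lemma IsTate.le_tateNorm {a : ℕ → K} (ha : IsTate R a) (k : ℕ) : ‖a k‖ * R ^ k ≤ tateNorm R a :=
  le_ciSup ha.bddAbove_range k

namespace BDist

lemma exists_bound_nonneg (hR : 0 ≤ R) (μ : BDist K R) :
    ∃ C, 0 ≤ C ∧ ∀ a, ‖μ.toFun a‖ ≤ C * tateNorm R (a : ℕ → K) := by
  obtain ⟨C, hC⟩ := μ.bound'
  exact ⟨max C 0, le_max_right _ _, fun a => (hC a).trans (by
    gcongr
    exacts [tateNorm_nonneg hR _, le_max_left _ _])⟩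

lemma map_zero (μ : BDist K R) {a : {a : ℕ → K // IsTate R a}} (ha : (a : ℕ → K) = 0) :
    μ.toFun a = 0 := by
  simpa using μ.map_smul' 0 a a (by simp [ha])

lemma map_sub (μ : BDist K R) {a b t : {a : ℕ → K // IsTate R a}}
    (ht : (t : ℕ → K) = a - b) : μ.toFun t = μ.toFun a - μ.toFun b := by
  rw [μ.map_add' t b a (by rw [ht, sub_add_cancel]), add_sub_cancel_right]

def toLinearMap (μ : BDist K R) : tateSubmodule K R →ₗ[K] K where
  toFun a := μ.toFun ⟨a, a.2⟩
  map_add' _ _ := μ.map_add' _ _ _ rfl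
  map_smul' r _ := μ.map_smul' r _ _ rfl

lemma map_sum (μ : BDist K R) {ι : Type*} (s : Finset ι) (w : ι → K)
    (e : ι → {a : ℕ → K // IsTate R a}) {t : {a : ℕ → K // IsTate R a}}
    (ht : (t : ℕ → K) = ∑ i ∈ s, w i • (e i : ℕ → K)) :
    μ.toFun t = ∑ i ∈ s, w i * μ.toFun (e i) := by
  have := _root_.map_sum μ.toLinearMap (fun i => w i • (⟨e i, (e i).2⟩ : tateSubmodule K R)) s
  simp only [map_smul, smul_eq_mul] at this
  refine (congrArg μ.toFun (Subtype.ext ?_)).trans this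
  simp [ht]

end BDist

noncomputable def tateHasseDeriv (a : ℕ → K) (k : ℕ) : ℕ → K :=
  fun m => a (m + k) * ((m + k).choose m : K)

lemma tateTranslate_apply (a : ℕ → K) (c : K) (m : ℕ) :
    tateTranslate a c m = ∑' k, tateHasseDeriv a k m * c ^ k :=
  rfl

lemma tateHasseDeriv_tateMono (k j : ℕ) :
    tateHasseDeriv (tateMono (K := K) R k).1 j =
      if j ≤ k then (k.choose j : K) • (tateMono (K := K) R (k - j)).1 else 0 := by
  funext m
  split_ifs with hjk
  · by_cases hm : m = k - j
    · subst hm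
      simp [tateHasseDeriv, tateMono, Nat.sub_add_cancel hjk, Nat.choose_symm hjk]
    · simp [tateHasseDeriv, tateMono, hm, show m + j ≠ k by omega]
  · simp [tateHasseDeriv, tateMono, show m + j ≠ k by omega]

section Ultrametric

variable [IsUltrametricDist K]

lemma norm_tateHasseDeriv_le (a : ℕ → K) (k m : ℕ) : ‖tateHasseDeriv a k m‖ ≤ ‖a (m + k)‖ := by
  rw [tateHasseDeriv, norm_mul]
  exact mul_le_of_le_one_right (norm_nonneg _) (IsUltrametricDist.norm_natCast_le_one K _)

lemma norm_tateHasseDeriv_mul_le (a : ℕ → K) (k m : ℕ) {r : ℝ} (hr : 0 ≤ r) (hrR : r ≤ R) :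
    ‖tateHasseDeriv a k m‖ * r ^ k * R ^ m ≤ ‖a (m + k)‖ * R ^ (m + k) := by
  have hR : 0 ≤ R := hr.trans hrR
  calc ‖tateHasseDeriv a k m‖ * r ^ k * R ^ m ≤ ‖a (m + k)‖ * R ^ k * R ^ m := by
        gcongr
        exact norm_tateHasseDeriv_le a k m
    _ = ‖a (m + k)‖ * R ^ (m + k) := by ring

lemma IsTate.tateHasseDeriv (hR : 0 < R) {a : ℕ → K} (ha : IsTate R a) (k : ℕ) :
    IsTate R (tateHasseDeriv a k) := by
  refine ha.tendsto_zero_of_tail_bound (C := (R ^ k)⁻¹) fun N B _ htail => ?_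
  rw [Real.norm_of_nonneg (by positivity), ← div_eq_inv_mul, le_div_iff₀ (by positivity),
    mul_right_comm]
  exact (norm_tateHasseDeriv_mul_le a k N hR.le le_rfl).trans (htail _ (Nat.le_add_right N k))

lemma tateNorm_tateHasseDeriv_le (hR : 0 < R) {a : ℕ → K} {k : ℕ} {B : ℝ} (hB : 0 ≤ B)
    (htail : ∀ j, k ≤ j → ‖a j‖ * R ^ j ≤ B) : tateNorm R (tateHasseDeriv a k) ≤ B / R ^ k := by
  refine tateNorm_le (by positivity) fun m => ?_
  rw [le_div_iff₀ (by positivity), mul_right_comm]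
  exact (norm_tateHasseDeriv_mul_le a k m hR.le le_rfl).trans (htail _ (Nat.le_add_left k m))

lemma norm_tateTranslate_mul_pow_le (hR : 0 < R) {a : ℕ → K} {c : K} (hc : ‖c‖ ≤ R) {m : ℕ}
    {B : ℝ} (hB : 0 ≤ B) (htail : ∀ j, m ≤ j → ‖a j‖ * R ^ j ≤ B) :
    ‖tateTranslate a c m‖ * R ^ m ≤ B := by
  rw [← le_div_iff₀ (by positivity), tateTranslate_apply]
  refine IsUltrametricDist.norm_tsum_le_of_forall_le_of_nonneg (by positivity) fun k => ?_
  rw [le_div_iff₀ (by positivity), norm_mul, norm_pow]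
  exact (norm_tateHasseDeriv_mul_le a k m (norm_nonneg c) hc).trans
    (htail _ (Nat.le_add_right m k))

lemma IsTate.tateTranslate (hR : 0 < R) {a : ℕ → K} (ha : IsTate R a) {c : K} (hc : ‖c‖ ≤ R) :
    IsTate R (tateTranslate a c) := by
  refine ha.tendsto_zero_of_tail_bound (C := 1) fun N B hB htail => ?_
  rw [Real.norm_of_nonneg (by positivity), one_mul]
  exact norm_tateTranslate_mul_pow_le hR hc hB htail

variable [CompleteSpace K]

lemma IsTate.summable_mul_pow {a : ℕ → K} (ha : IsTate R a) {c : K} (hc : ‖c‖ ≤ R) :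
    Summable fun m => a m * c ^ m := by
  refine NonarchimedeanAddGroup.summable_of_tendsto_cofinite_zero ?_
  rw [Nat.cofinite_eq_atTop]
  refine squeeze_zero_norm (fun m => ?_) ha
  rw [norm_mul, norm_pow]
  gcongr

lemma summable_tateHasseDeriv_mul_pow (hR : 0 < R) {a : ℕ → K} (ha : IsTate R a) {c : K}
    (hc : ‖c‖ ≤ R) (m : ℕ) : Summable fun k => tateHasseDeriv a k m * c ^ k := by
  refine NonarchimedeanAddGroup.summable_of_tendsto_cofinite_zero ?_
  rw [Nat.cofinite_eq_atTop]
  refine ha.tendsto_zero_of_tail_bound (C := (R ^ m)⁻¹) fun k B _ htail => ?_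
  rw [← div_eq_inv_mul, le_div_iff₀ (by positivity), norm_mul, norm_pow]
  exact (norm_tateHasseDeriv_mul_le a k m (norm_nonneg c) hc).trans
    (htail _ (Nat.le_add_left k m))

open Finset Finset.HasAntidiagonal in
lemma tsum_tateTranslate_mul_pow {a : ℕ → K} (ha : IsTate R a) {c x : K}
    (hc : ‖c‖ ≤ R) (hx : ‖x‖ ≤ R) :
    ∑' m, tateTranslate a c m * x ^ m = ∑' n, a n * (x + c) ^ n := by
  set F : ℕ × ℕ → K := fun p => tateHasseDeriv a p.2 p.1 * c ^ p.2 * x ^ p.1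
  have hF : Summable F := by
    refine NonarchimedeanAddGroup.summable_of_tendsto_cofinite_zero ?_
    refine squeeze_zero_norm (fun p => ?_) (ha.comp tendsto_add_cofinite_atTop)
    rw [Function.comp_apply, norm_mul, norm_mul, norm_pow, norm_pow]
    calc ‖tateHasseDeriv a p.2 p.1‖ * ‖c‖ ^ p.2 * ‖x‖ ^ p.1
        ≤ ‖tateHasseDeriv a p.2 p.1‖ * ‖c‖ ^ p.2 * R ^ p.1 := by gcongr
      _ ≤ ‖a (p.1 + p.2)‖ * R ^ (p.1 + p.2) :=
        norm_tateHasseDeriv_mul_le a _ _ (norm_nonneg c) hc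
  calc ∑' m, tateTranslate a c m * x ^ m = ∑' p, F p := by
        rw [hF.tsum_prod' hF.prod_factor]
        exact tsum_congr fun m => tsum_mul_right.symm
    _ = ∑' n, ∑ p ∈ antidiagonal n, F p := hF.tsum_eq_tsum_sum_antidiagonal
    _ = ∑' n, a n * (x + c) ^ n := by
        refine tsum_congr fun n => ?_
        rw [(Commute.all x c).add_pow', mul_sum]
        refine sum_congr rfl fun p hp => ?_
        rw [Finset.HasAntidiagonal.mem_antidiagonal] at hp
        subst hp
        simp only [F, tateHasseDeriv, nsmul_eq_mul]
        ring

lemma tateNorm_tateTranslate_sub_sum_le (hR : 0 < R) {a : ℕ → K} (ha : IsTate R a) {c : K}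
    (hc : ‖c‖ ≤ R) {N : ℕ} {B : ℝ} (hB : 0 ≤ B) (htail : ∀ j, N ≤ j → ‖a j‖ * R ^ j ≤ B) :
    tateNorm R (tateTranslate a c - ∑ k ∈ Finset.range N, c ^ k • tateHasseDeriv a k) ≤ B := by
  refine tateNorm_le hB fun m => ?_
  have hrem : (tateTranslate a c - ∑ k ∈ Finset.range N, c ^ k • tateHasseDeriv a k) m =
      ∑' k, tateHasseDeriv a (k + N) m * c ^ (k + N) := by
    rw [Pi.sub_apply, tateTranslate_apply,
      ← (summable_tateHasseDeriv_mul_pow hR ha hc m).sum_add_tsum_nat_add N]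
    simp [Finset.sum_apply, mul_comm]
  rw [hrem, ← le_div_iff₀ (by positivity)]
  refine IsUltrametricDist.norm_tsum_le_of_forall_le_of_nonneg (by positivity) fun k => ?_
  rw [le_div_iff₀ (by positivity), norm_mul, norm_pow]
  exact (norm_tateHasseDeriv_mul_le a _ m (norm_nonneg c) hc).trans (htail _ (by omega))

open FormalMultilinearSeries in
lemma IsTate.hasFPowerSeriesOnBall {𝕜 : Type*} [NontriviallyNormedField 𝕜] [IsUltrametricDist 𝕜]
    [CompleteSpace 𝕜] (hR : 0 < R) {a : ℕ → 𝕜} (ha : IsTate R a) :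
    HasFPowerSeriesOnBall (fun x => ∑' m, a m * x ^ m) (ofScalars 𝕜 a) 0 (ENNReal.ofReal R) where
  r_le := by
    refine le_radius_of_bound _ (tateNorm R a) fun n => ?_
    rw [ofScalars_norm, Real.coe_toNNReal _ hR.le]
    exact ha.le_tateNorm n
  r_pos := ENNReal.ofReal_pos.2 hR
  hasSum hy := by
    simp only [ofScalars_apply_eq, smul_eq_mul, zero_add]
    refine (ha.summable_mul_pow ?_).hasSum
    rw [mem_eball_zero_iff, ← ofReal_norm] at hy
    exact ((ENNReal.ofReal_lt_ofReal_iff_of_nonneg (norm_nonneg _)).1 hy).le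

open FormalMultilinearSeries in
lemma IsTate.eq_of_forall_tsum_mul_pow_eq {𝕜 : Type*} [NontriviallyNormedField 𝕜]
    [IsUltrametricDist 𝕜] [CompleteSpace 𝕜] (hR : 0 < R) {a b : ℕ → 𝕜} (ha : IsTate R a)
    (hb : IsTate R b) (h : ∀ c : 𝕜, ‖c‖ ≤ R → ∑' m, a m * c ^ m = ∑' m, b m * c ^ m) :
    a = b := by
  refine ofScalars_series_injective 𝕜 𝕜 ((ha.hasFPowerSeriesOnBall hR).hasFPowerSeriesAt
    |>.eq_formalMultilinearSeries_of_eventually (hb.hasFPowerSeriesOnBall hR).hasFPowerSeriesAt ?_)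
  filter_upwards [Metric.closedBall_mem_nhds (0 : 𝕜) hR] with c hc
  exact h c (by simpa using hc)

end Ultrametric

namespace BDist

variable [IsUltrametricDist K]

noncomputable def translateCoeff (hR : 0 < R) (ν : BDist K R) (a : {a : ℕ → K // IsTate R a})
    (k : ℕ) : K :=
  ν.toFun ⟨tateHasseDeriv a k, a.2.tateHasseDeriv hR k⟩

lemma norm_translateCoeff_mul_pow_le (hR : 0 < R) (ν : BDist K R) {C : ℝ} (hC0 : 0 ≤ C)
    (hC : ∀ b, ‖ν.toFun b‖ ≤ C * tateNorm R (b : ℕ → K)) (a : {a : ℕ → K // IsTate R a})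
    {k : ℕ} {B : ℝ} (hB : 0 ≤ B) (htail : ∀ j, k ≤ j → ‖(a : ℕ → K) j‖ * R ^ j ≤ B) :
    ‖ν.translateCoeff hR a k‖ * R ^ k ≤ C * B := by
  rw [← le_div_iff₀ (by positivity), mul_div_assoc]
  exact (hC _).trans (mul_le_mul_of_nonneg_left (tateNorm_tateHasseDeriv_le hR hB htail) hC0)

lemma isTate_translateCoeff (hR : 0 < R) (ν : BDist K R) (a : {a : ℕ → K // IsTate R a}) :
    IsTate R (ν.translateCoeff hR a) := by
  obtain ⟨C, hC0, hC⟩ := ν.exists_bound_nonneg hR.le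
  refine a.2.tendsto_zero_of_tail_bound (C := C) fun N B hB htail => ?_
  rw [Real.norm_of_nonneg (by positivity)]
  exact ν.norm_translateCoeff_mul_pow_le hR hC0 hC a hB htail

lemma tateNorm_translateCoeff_le (hR : 0 < R) (ν : BDist K R) {C : ℝ} (hC0 : 0 ≤ C)
    (hC : ∀ b, ‖ν.toFun b‖ ≤ C * tateNorm R (b : ℕ → K)) (a : {a : ℕ → K // IsTate R a}) :
    tateNorm R (ν.translateCoeff hR a) ≤ C * tateNorm R (a : ℕ → K) :=
  tateNorm_le (mul_nonneg hC0 (tateNorm_nonneg hR.le _)) fun _ =>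
    ν.norm_translateCoeff_mul_pow_le hR hC0 hC a (tateNorm_nonneg hR.le _)
      fun j _ => a.2.le_tateNorm j

lemma translateCoeff_tateMono (hR : 0 < R) (ν : BDist K R) (k j : ℕ) :
    ν.translateCoeff hR (tateMono R k) j =
      if j ≤ k then (k.choose j : K) * ν.toFun (tateMono R (k - j)) else 0 := by
  split_ifs with hjk
  · exact ν.map_smul' _ _ _ ((tateHasseDeriv_tateMono k j).trans (if_pos hjk))
  · exact ν.map_zero ((tateHasseDeriv_tateMono k j).trans (if_neg hjk))

noncomputable def conv (hR : 0 < R) (μ ν : BDist K R) : BDist K R where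
  toFun a := μ.toFun ⟨ν.translateCoeff hR a, ν.isTate_translateCoeff hR a⟩
  map_add' a b s hs := μ.map_add' _ _ _ <| funext fun k => ν.map_add' _ _ _ <| funext fun m => by
    simp [tateHasseDeriv, hs, add_mul]
  map_smul' r a b hb := μ.map_smul' r _ _ <| funext fun k => ν.map_smul' r _ _ <| funext fun m => by
    simp [tateHasseDeriv, hb, mul_assoc]
  bound' := by
    obtain ⟨Cμ, hCμ0, hCμ⟩ := μ.exists_bound_nonneg hR.le
    obtain ⟨Cν, hCν0, hCν⟩ := ν.exists_bound_nonneg hR.le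
    refine ⟨Cμ * Cν, fun a => (hCμ _).trans ?_⟩
    rw [mul_assoc]
    exact mul_le_mul_of_nonneg_left (ν.tateNorm_translateCoeff_le hR hCν0 hCν a) hCμ0

lemma conv_apply (hR : 0 < R) (μ ν : BDist K R) (a : {a : ℕ → K // IsTate R a}) :
    (μ.conv hR ν).toFun a = μ.toFun ⟨ν.translateCoeff hR a, ν.isTate_translateCoeff hR a⟩ :=
  rfl

lemma conv_tateMono (hR : 0 < R) (μ ν : BDist K R) (k : ℕ) :
    (μ.conv hR ν).toFun (tateMono R k) = ∑ m ∈ Finset.range (k + 1),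
      (k.choose m : K) * μ.toFun (tateMono R m) * ν.toFun (tateMono R (k - m)) := by
  rw [conv_apply, μ.map_sum (Finset.range (k + 1))
    (fun m => (k.choose m : K) * ν.toFun (tateMono R (k - m))) (tateMono R)]
  · exact Finset.sum_congr rfl fun m _ => by ring
  funext j
  simp only [translateCoeff_tateMono, Finset.sum_apply, Pi.smul_apply, smul_eq_mul]
  simp [tateMono]

variable [CompleteSpace K]

lemma hasSum_translateCoeff_mul_pow (hR : 0 < R) (ν : BDist K R)
    (a : {a : ℕ → K // IsTate R a}) {c : K} (hc : ‖c‖ ≤ R) :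
    HasSum (fun k => ν.translateCoeff hR a k * c ^ k)
      (ν.toFun ⟨tateTranslate a c, a.2.tateTranslate hR hc⟩) := by
  obtain ⟨C, hC0, hC⟩ := ν.exists_bound_nonneg hR.le
  rw [((ν.isTate_translateCoeff hR a).summable_mul_pow hc).hasSum_iff_tendsto_nat,
    ← tendsto_sub_nhds_zero_iff]
  refine a.2.tendsto_zero_of_tail_bound (C := C) fun N B hB htail => ?_
  set P : ℕ → K := ∑ k ∈ Finset.range N, c ^ k • tateHasseDeriv a k
  have hP : IsTate R P :=
    (tateSubmodule K R).sum_mem fun k _ => (a.2.tateHasseDeriv hR k).const_smul _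
  have hrem : IsTate R (tateTranslate a c - P) :=
    (tateSubmodule K R).sub_mem (a.2.tateTranslate hR hc) hP
  have hpartial : ∑ k ∈ Finset.range N, ν.translateCoeff hR a k * c ^ k = ν.toFun ⟨P, hP⟩ := by
    rw [ν.map_sum (Finset.range N) (fun k => c ^ k)
      (fun k => ⟨tateHasseDeriv a k, a.2.tateHasseDeriv hR k⟩) rfl]
    exact Finset.sum_congr rfl fun k _ => mul_comm _ _
  rw [hpartial, ← neg_sub, ← ν.map_sub (t := ⟨_, hrem⟩) rfl, norm_neg]
  exact (hC _).trans (mul_le_mul_of_nonneg_left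
    (tateNorm_tateTranslate_sub_sum_le hR a.2 hc hB htail) hC0)

end BDist

end

theorem statement10_general (p : ℕ) [Fact p.Prime]
    {K : Type*} [NormedField K] [CompleteSpace K] [Algebra ℚ_[p] K]
    (hnorm : ∀ x : ℚ_[p], ‖(algebraMap ℚ_[p] K) x‖ = ‖x‖)
    (hna : ∀ x y : K, ‖x + y‖ ≤ max ‖x‖ ‖y‖)
    (q : ℚ) (R : ℝ) (hR : R = (p : ℝ) ^ (q : ℝ))
    (μ ν : BDist K R) :
    (∀ a : ℕ → K, IsTate R a → ∀ c : K, ‖c‖ ≤ R →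
        IsTate R (tateTranslate a c) ∧
        ∀ x : K, ‖x‖ ≤ R →
          ∑' m : ℕ, tateTranslate a c m * x ^ m = ∑' k : ℕ, a k * (x + c) ^ k) ∧
    (∀ a : ℕ → K, IsTate R a →
        ∃ g : ℕ → K, IsTate R g ∧
          ∀ c : K, ‖c‖ ≤ R → ∀ h : IsTate R (tateTranslate a c),
            (∑' m : ℕ, g m * c ^ m) = ν.toFun ⟨tateTranslate a c, h⟩) ∧
    (∃ conv : BDist K R,
        (∀ (a : ℕ → K) (ha : IsTate R a) (g : ℕ → K) (hg : IsTate R g),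
            (∀ c : K, ‖c‖ ≤ R → ∀ h : IsTate R (tateTranslate a c),
                (∑' m : ℕ, g m * c ^ m) = ν.toFun ⟨tateTranslate a c, h⟩) →
            conv.toFun ⟨a, ha⟩ = μ.toFun ⟨g, hg⟩) ∧
        (∀ k : ℕ, conv.toFun (tateMono R k) =
            ∑ m ∈ Finset.range (k + 1),
              (k.choose m : K) * μ.toFun (tateMono R m) * ν.toFun (tateMono R (k - m)))) := by
  have := IsUltrametricDist.isUltrametricDist_of_forall_norm_add_le_max_norm hna
  have hp : (1 : ℝ) < p := by exact_mod_cast (Fact.out : p.Prime).one_lt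
  have hR0 : 0 < R := hR ▸ Real.rpow_pos_of_pos (by linarith) _
  let _ : NontriviallyNormedField K :=
    { ‹NormedField K› with
      non_trivial := ⟨(p : K)⁻¹, by
        rwa [norm_inv, ← map_natCast (algebraMap ℚ_[p] K), hnorm, Padic.norm_p, inv_inv]⟩ }
  refine ⟨fun a ha c hc => ⟨ha.tateTranslate hR0 hc, fun x => tsum_tateTranslate_mul_pow ha hc⟩,
    fun a ha => ⟨_, ν.isTate_translateCoeff hR0 ⟨a, ha⟩,
      fun c hc _ => (ν.hasSum_translateCoeff_mul_pow hR0 ⟨a, ha⟩ hc).tsum_eq⟩,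
    μ.conv hR0 ν, fun a ha g hg hrep => ?_, μ.conv_tateMono hR0 ν⟩
  have hcoeff : ν.translateCoeff hR0 ⟨a, ha⟩ = g :=
    (ν.isTate_translateCoeff hR0 ⟨a, ha⟩).eq_of_forall_tsum_mul_pow_eq hR0 hg fun c hc =>
      (ν.hasSum_translateCoeff_mul_pow hR0 ⟨a, ha⟩ hc).tsum_eq.trans (hrep c hc _).symm
  exact congrArg μ.toFun (Subtype.ext hcoeff)

/-- Convolution of bounded distributions: for `f` in the Tate algebra of radius `R`
and `‖c‖ ≤ R`, the translate `T_c f (x) = f(x+c)` lies in the Tate algebra;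
the function `c ↦ ν(T_c f)` is given by an element of the Tate algebra; and
`(μ*ν)(f) = μ(c ↦ ν(T_c f))` defines a bounded distribution whose moments are
`(μ*ν)(x^k) = ∑_{m ≤ k} (k choose m) μ(x^m) ν(x^{k-m})`.
Here `K` plays the role of `ℂ_p`, and `R = p^q` with `q` rational. -/
theorem statement10 (p : ℕ) [Fact p.Prime] (hodd : Odd p)
    {K : Type*} [NormedField K] [CompleteSpace K] [IsAlgClosed K] [Algebra ℚ_[p] K]
    (hnorm : ∀ x : ℚ_[p], ‖(algebraMap ℚ_[p] K) x‖ = ‖x‖)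
    (hna : ∀ x y : K, ‖x + y‖ ≤ max ‖x‖ ‖y‖)
    (q : ℚ) (R : ℝ) (hR : R = (p : ℝ) ^ (q : ℝ))
    (μ ν : BDist K R) :
    (∀ a : ℕ → K, IsTate R a → ∀ c : K, ‖c‖ ≤ R →
        IsTate R (tateTranslate a c) ∧
        ∀ x : K, ‖x‖ ≤ R →
          ∑' m : ℕ, tateTranslate a c m * x ^ m = ∑' k : ℕ, a k * (x + c) ^ k) ∧
    (∀ a : ℕ → K, IsTate R a →
        ∃ g : ℕ → K, IsTate R g ∧
          ∀ c : K, ‖c‖ ≤ R → ∀ h : IsTate R (tateTranslate a c),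
            (∑' m : ℕ, g m * c ^ m) = ν.toFun ⟨tateTranslate a c, h⟩) ∧
    (∃ conv : BDist K R,
        (∀ (a : ℕ → K) (ha : IsTate R a) (g : ℕ → K) (hg : IsTate R g),
            (∀ c : K, ‖c‖ ≤ R → ∀ h : IsTate R (tateTranslate a c),
                (∑' m : ℕ, g m * c ^ m) = ν.toFun ⟨tateTranslate a c, h⟩) →
            conv.toFun ⟨a, ha⟩ = μ.toFun ⟨g, hg⟩) ∧
        (∀ k : ℕ, conv.toFun (tateMono R k) =
            ∑ m ∈ Finset.range (k + 1),
              (k.choose m : K) * μ.toFun (tateMono R m) * ν.toFun (tateMono R (k - m)))) :=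
  statement10_general p hnorm hna q R hR μ ν
end
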